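/- arXiv:0804.3729 — 3 statements merged into one kernel-verified Lean document; each statement's English description precedes it below -/
import Mathlib

section
/- For every real t with 0 ≤ t < 1/2 and all real x, y, one has (1-t)³·x² + (2-3t)·x·y + y² ≥ (1/10)·(x+y)². Equivalently, the discriminant 4((1-t)³ - 1/10)(1 - 1/10) - ((2-3t) - 2/10)² = (9/5)t² - (18/5)t³ is nonnegative. -/
theorem stmt_4 (t : ℝ) (ht0 : 0 ≤ t) (ht1 : t < 1/2) :
    (∀ x y : ℝ, (1-t)^3 * x^2 + (2-3*t) * x * y + y^2 ≥ (1/10) * (x+y)^2) ∧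
    4*((1-t)^3 - 1/10)*(1 - 1/10) - ((2-3*t) - 2/10)^2 = (9/5)*t^2 - (18/5)*t^3 ∧
    0 ≤ (9/5)*t^2 - (18/5)*t^3 := by
  have hd : 0 ≤ (9/5)*t^2 - (18/5)*t^3 := by nlinarith [sq_nonneg t]
  have ha : 0 < (1-t)^3 - 1/10 := by nlinarith
  refine ⟨fun x y => ?_, by ring, hd⟩
  have h1 := sq_nonneg (2*((1-t)^3 - 1/10)*x + ((2-3*t) - 1/5)*y)
  have h2 := mul_nonneg hd (sq_nonneg y)
  nlinarith [mul_pos ha ha, h1, h2]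
end

section
/- Let a(t) = 1/4 - (3/4)t + (3/4)t² - (1/4)t³, b(t) = 1/2 - (3/2)t, c(t) = 1/4 - 3t/(4(1-t)), and g(t) = t³(t-1)/(1-4t). Then for all real t with 0 ≤ t < 1/4 and all real x ≥ 0, y ≥ 0, one has a(t)·x² - b(t)·x·y + c(t)·y² ≥ g(t)·x². -/
/-!
With `c(t) = (1 - 4t) / (4(1 - t)) > 0`, completing the square in `y` gives
`a x² - b x y + c y² ≥ (a - b² / (4c)) x²`, and the identity
`(1 - t)² (1 - 4t) - (1 - 3t)² = -4t³` turns `a - b² / (4c)` into `g(t)`.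
-/

theorem sq_sub_mul_add_sq_ge_of_pos {K : Type*} [Field K] [LinearOrder K] [IsStrictOrderedRing K]
    {a b c : K} (hc : 0 < c) (x y : K) :
    (a - b ^ 2 / (4 * c)) * x ^ 2 ≤ a * x ^ 2 - b * x * y + c * y ^ 2 := by
  have h : a * x ^ 2 - b * x * y + c * y ^ 2 - (a - b ^ 2 / (4 * c)) * x ^ 2
      = (2 * c * y - b * x) ^ 2 / (4 * c) := by
    field_simp
    ring
  have : 0 ≤ (2 * c * y - b * x) ^ 2 / (4 * c) := by positivity
  linarith

section Coefficients

variable {t : ℝ}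

theorem coeff_c_eq (ht : t < 1 / 4) :
    1 / 4 - 3 * t / (4 * (1 - t)) = (1 - 4 * t) / (4 * (1 - t)) := by
  have : 1 - t ≠ 0 := by linarith
  field_simp
  ring

theorem coeff_c_pos (ht : t < 1 / 4) : 0 < 1 / 4 - 3 * t / (4 * (1 - t)) := by
  rw [coeff_c_eq ht]
  apply div_pos <;> linarith

theorem coeff_a_sub_sq_div_eq (ht : t < 1 / 4) :
    (1/4 - (3/4)*t + (3/4)*t^2 - (1/4)*t^3)
        - (1/2 - (3/2)*t) ^ 2 / (4 * (1/4 - 3*t/(4*(1-t))))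
      = t^3 * (t-1) / (1 - 4*t) := by
  have h1 : 1 - t ≠ 0 := by linarith
  have h4 : 1 - 4 * t ≠ 0 := by linarith
  rw [coeff_c_eq ht]
  field_simp
  ring

end Coefficients

theorem stmt_6_general (t x y : ℝ) (ht1 : t < 1/4) :
    (1/4 - (3/4)*t + (3/4)*t^2 - (1/4)*t^3) * x^2
      - (1/2 - (3/2)*t) * x * y
      + (1/4 - 3*t/(4*(1-t))) * y^2
    ≥ (t^3 * (t-1) / (1 - 4*t)) * x^2 := by
  rw [← coeff_a_sub_sq_div_eq ht1]
  exact sq_sub_mul_add_sq_ge_of_pos (coeff_c_pos ht1) x y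

theorem stmt_6 (t x y : ℝ) (ht0 : 0 ≤ t) (ht1 : t < 1/4) (hx : 0 ≤ x) (hy : 0 ≤ y) :
    (1/4 - (3/4)*t + (3/4)*t^2 - (1/4)*t^3) * x^2
      - (1/2 - (3/2)*t) * x * y
      + (1/4 - 3*t/(4*(1-t))) * y^2
    ≥ (t^3 * (t-1) / (1 - 4*t)) * x^2 :=
  stmt_6_general t x y ht1
end

section
/- In the octonions O, let ad_q(x) = q·x - x·q acting on the imaginary octonions Im(O). Then the kernel of the commutator [ad_i, ad_j] : Im(O) → Im(O) is exactly the one-dimensional span of k (where i, j, k are the standard imaginary quaternion units inside O). Consequently [ad_i, ad_j] has rank 6. -/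
open Quaternion

/-- The octonions, realized as pairs of quaternions via the Cayley–Dickson construction. -/
abbrev Octonion : Type := ℍ[ℝ] × ℍ[ℝ]

/-- Cayley–Dickson multiplication on the octonions. -/
noncomputable def omul (x y : Octonion) : Octonion :=
  (x.1 * y.1 - star y.2 * x.2, y.2 * x.1 + x.2 * star y.1)

/-- `ad_q : O → O`, `x ↦ q·x - x·q`, as an ℝ-linear map. -/
noncomputable def adO (q : Octonion) : Octonion →ₗ[ℝ] Octonion where
  toFun x := omul q x - omul x q
  map_add' x y := by
    simp only [omul, Prod.fst_add, Prod.snd_add, star_add, mul_add, add_mul, Prod.mk_add_mk,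
      Prod.mk_sub_mk]
    rw [Prod.mk.injEq]; constructor <;> abel
  map_smul' r x := by
    simp only [omul, Prod.smul_fst, Prod.smul_snd, Quaternion.star_smul, mul_smul_comm,
      smul_mul_assoc, RingHom.id_apply, Prod.smul_mk, star_trivial, smul_sub, smul_add]

/-- The standard imaginary unit `i` of the octonions. -/
noncomputable def iO : Octonion := ((⟨0, 1, 0, 0⟩ : ℍ[ℝ]), 0)

/-- The standard imaginary unit `j` of the octonions. -/
noncomputable def jO : Octonion := ((⟨0, 0, 1, 0⟩ : ℍ[ℝ]), 0)

/-- The standard imaginary unit `k` of the octonions. -/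
noncomputable def kO : Octonion := ((⟨0, 0, 0, 1⟩ : ℍ[ℝ]), 0)

/-- The imaginary octonions: the orthogonal complement of `1 = (1,0)`. -/
def ImO : Submodule ℝ Octonion where
  carrier := {x | x.1.re = 0}
  add_mem' := by intro a b ha hb; simp_all [Set.mem_setOf_eq]
  zero_mem' := by simp
  smul_mem' := by intro c a ha; simp_all [Set.mem_setOf_eq]

lemma Lx (x : Octonion) : (adO iO ∘ₗ adO jO - adO jO ∘ₗ adO iO) x =
    ((⟨0, -4*x.1.imJ, 4*x.1.imI, 0⟩ : ℍ[ℝ]),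
     (⟨8*x.2.imK, -8*x.2.imJ, 8*x.2.imI, -8*x.2.re⟩ : ℍ[ℝ])) := by
  refine Prod.ext ?_ ?_ <;> refine Quaternion.ext _ _ ?_ ?_ ?_ ?_ <;>
  simp only [LinearMap.sub_apply, LinearMap.comp_apply, adO, omul, LinearMap.coe_mk,
    AddHom.coe_mk] <;>
    simp only [Prod.fst_sub, Prod.snd_sub, Quaternion.re_sub, Quaternion.imI_sub,
      Quaternion.imJ_sub, Quaternion.imK_sub, Quaternion.re_add, Quaternion.imI_add,
      Quaternion.imJ_add, Quaternion.imK_add, Quaternion.re_mul, Quaternion.imI_mul,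
      Quaternion.imJ_mul, Quaternion.imK_mul, Quaternion.re_star, Quaternion.imI_star,
      Quaternion.imJ_star, Quaternion.imK_star, Quaternion.re_zero, Quaternion.imI_zero,
      Quaternion.imJ_zero, Quaternion.imK_zero] <;>
    simp only [iO, jO, Prod.fst_zero, Prod.snd_zero, Quaternion.re_zero, Quaternion.imI_zero,
      Quaternion.imJ_zero, Quaternion.imK_zero] <;>
    ring

noncomputable def wV : Fin 6 → Octonion
  | 0 => ((⟨0,0,4,0⟩ : ℍ[ℝ]), 0)
  | 1 => ((⟨0,-4,0,0⟩ : ℍ[ℝ]), 0)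
  | 2 => (0, (⟨0,0,0,-8⟩ : ℍ[ℝ]))
  | 3 => (0, (⟨0,0,8,0⟩ : ℍ[ℝ]))
  | 4 => (0, (⟨0,-8,0,0⟩ : ℍ[ℝ]))
  | 5 => (0, (⟨8,0,0,0⟩ : ℍ[ℝ]))


lemma Lx_comb (x : Octonion) : (adO iO ∘ₗ adO jO - adO jO ∘ₗ adO iO) x =
    x.1.imI • wV 0 + x.1.imJ • wV 1 + x.2.re • wV 2 + x.2.imI • wV 3
      + x.2.imJ • wV 4 + x.2.imK • wV 5 := by
  rw [Lx]
  refine Prod.ext ?_ ?_ <;> refine Quaternion.ext _ _ ?_ ?_ ?_ ?_ <;>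
    simp only [Prod.fst_add, Prod.snd_add, Prod.smul_fst, Prod.smul_snd,
      Quaternion.re_add, Quaternion.imI_add, Quaternion.imJ_add, Quaternion.imK_add,
      Quaternion.re_smul, Quaternion.imI_smul, Quaternion.imJ_smul, Quaternion.imK_smul,
      smul_eq_mul] <;>
    simp only [wV, Prod.fst_zero, Prod.snd_zero, Quaternion.re_zero, Quaternion.imI_zero,
      Quaternion.imJ_zero, Quaternion.imK_zero] <;> ring

lemma wV_li : LinearIndependent ℝ wV := by
  rw [Fintype.linearIndependent_iff]
  intro g hg
  rw [Fin.sum_univ_six, Prod.ext_iff, Quaternion.ext_iff, Quaternion.ext_iff] at hg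
  simp only [Prod.smul_fst, Prod.smul_snd, Prod.fst_add, Prod.snd_add,
    Quaternion.re_add, Quaternion.imI_add, Quaternion.imJ_add, Quaternion.imK_add,
    Quaternion.re_smul, Quaternion.imI_smul, Quaternion.imJ_smul, Quaternion.imK_smul,
    Quaternion.re_zero, Quaternion.imI_zero, Quaternion.imJ_zero, Quaternion.imK_zero,
    Prod.fst_zero, Prod.snd_zero, smul_eq_mul, smul_zero] at hg
  simp only [wV, Prod.fst_zero, Prod.snd_zero, Quaternion.re_zero, Quaternion.imI_zero,
    Quaternion.imJ_zero, Quaternion.imK_zero] at hg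
  obtain ⟨⟨-, h1, h2, -⟩, h3, h4, h5, h6⟩ := hg
  have e0 : g 0 = 0 := by linarith
  have e1 : g 1 = 0 := by linarith
  have e2 : g 2 = 0 := by linarith
  have e3 : g 3 = 0 := by linarith
  have e4 : g 4 = 0 := by linarith
  have e5 : g 5 = 0 := by linarith
  intro i
  fin_cases i <;> assumption

theorem stmt_12 :
    (∀ x : Octonion, x ∈ ImO →
      ((adO iO ∘ₗ adO jO - adO jO ∘ₗ adO iO) x = 0 ↔ ∃ c : ℝ, x = c • kO)) ∧
    Module.finrank ℝ
      (LinearMap.range ((adO iO ∘ₗ adO jO - adO jO ∘ₗ adO iO).domRestrict ImO)) = 6 := by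
  constructor
  · intro x hx
    have hre : x.1.re = 0 := hx
    constructor
    · intro h
      rw [Lx] at h
      replace h := (Prod.ext_iff.mp h).imp Quaternion.ext_iff.mp Quaternion.ext_iff.mp
      simp only [Prod.fst_zero, Prod.snd_zero, Quaternion.re_zero, Quaternion.imI_zero,
        Quaternion.imJ_zero, Quaternion.imK_zero] at h
      obtain ⟨⟨-, hb, hc, -⟩, hh, hg, hf, he⟩ := h
      refine ⟨x.1.imK, ?_⟩
      refine Prod.ext ?_ ?_
      · refine Quaternion.ext _ _ ?_ ?_ ?_ ?_ <;> simp [Quaternion.re_smul] <;> simp [kO] <;> linarith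
      · refine Quaternion.ext _ _ ?_ ?_ ?_ ?_ <;> simp [kO, Quaternion.re_smul] <;> linarith
    · rintro ⟨c, rfl⟩
      rw [Lx]
      refine Prod.ext_iff.mpr ⟨Quaternion.ext_iff.mpr ?_, Quaternion.ext_iff.mpr ?_⟩ <;>
      simp [Quaternion.re_smul, Quaternion.imI_smul, Quaternion.imJ_smul,
        Quaternion.imK_smul] <;> simp [kO]
  · have hrange : LinearMap.range ((adO iO ∘ₗ adO jO - adO jO ∘ₗ adO iO).domRestrict ImO)
        = Submodule.span ℝ (Set.range wV) := by
      apply le_antisymm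
      · rintro y ⟨⟨x, hx⟩, rfl⟩
        rw [LinearMap.domRestrict_apply, Lx_comb]
        have m : ∀ i : Fin 6, wV i ∈ Submodule.span ℝ (Set.range wV) := fun i =>
          Submodule.subset_span (Set.mem_range_self i)
        exact Submodule.add_mem _ (Submodule.add_mem _ (Submodule.add_mem _ (Submodule.add_mem _
          (Submodule.add_mem _ (Submodule.smul_mem _ _ (m 0)) (Submodule.smul_mem _ _ (m 1)))
          (Submodule.smul_mem _ _ (m 2))) (Submodule.smul_mem _ _ (m 3)))
          (Submodule.smul_mem _ _ (m 4))) (Submodule.smul_mem _ _ (m 5))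
      · rw [Submodule.span_le]
        rintro y ⟨i, rfl⟩
        fin_cases i
        · exact ⟨⟨iO, (rfl : iO.1.re = 0)⟩, by
            rw [LinearMap.domRestrict_apply, Lx]
            simp [wV, iO, Prod.ext_iff, Quaternion.ext_iff] <;> rfl⟩
        · exact ⟨⟨jO, (rfl : jO.1.re = 0)⟩, by
            rw [LinearMap.domRestrict_apply, Lx]
            simp [wV, jO, Prod.ext_iff, Quaternion.ext_iff] <;> rfl⟩
        · exact ⟨⟨(0, (⟨1,0,0,0⟩ : ℍ[ℝ])), (by simp : ((0 : ℍ[ℝ]), (⟨1,0,0,0⟩ : ℍ[ℝ])).1.re = 0)⟩, by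
            rw [LinearMap.domRestrict_apply, Lx]
            simp [wV, Prod.ext_iff, Quaternion.ext_iff] <;> rfl⟩
        · exact ⟨⟨(0, (⟨0,1,0,0⟩ : ℍ[ℝ])), (by simp : ((0 : ℍ[ℝ]), (⟨0,1,0,0⟩ : ℍ[ℝ])).1.re = 0)⟩, by
            rw [LinearMap.domRestrict_apply, Lx]
            simp [wV, Prod.ext_iff, Quaternion.ext_iff] <;> rfl⟩
        · exact ⟨⟨(0, (⟨0,0,1,0⟩ : ℍ[ℝ])), (by simp : ((0 : ℍ[ℝ]), (⟨0,0,1,0⟩ : ℍ[ℝ])).1.re = 0)⟩, by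
            rw [LinearMap.domRestrict_apply, Lx]
            simp [wV, Prod.ext_iff, Quaternion.ext_iff] <;> rfl⟩
        · exact ⟨⟨(0, (⟨0,0,0,1⟩ : ℍ[ℝ])), (by simp : ((0 : ℍ[ℝ]), (⟨0,0,0,1⟩ : ℍ[ℝ])).1.re = 0)⟩, by
            rw [LinearMap.domRestrict_apply, Lx]
            simp [wV, Prod.ext_iff, Quaternion.ext_iff] <;> rfl⟩
    rw [hrange, finrank_span_eq_card wV_li]
    rfl
end
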